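/- For each m ∈ ℕ let R′_m := sup { r ∈ [0, ∞) : for every function f(z) = ∑_{n≥m} a_n zⁿ analytic on 𝔻 satisfying sup_{z∈𝔻} |f^{(m)}(z)| ≤ 1, and for every ρ ∈ [0, r], the series ∑_{n≥m} |a_n| ρⁿ converges and is ≤ 1 }. Then R′_m → 1 as m → ∞. (This is the statement that the Bohr radius R_{∂^m → id} of the pair (m-th derivative operator, identity) tends to 1.) -/

import Mathlib

/-!
Cauchy's estimate for `f^{(m)}`, which is bounded by `1` on the disk, gives `n! |aₙ| ≤ (n-m)!`,
hence `|aₙ| ≤ 1/m!`; the majorant series is then at most `1/(m! (1-ρ))`, which is `≤ 1` for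
`ρ ≤ 1 - 1/m`. Conversely the monomials `zᴺ / (N(N-1)⋯(N-m+1))` are admissible, and at `r > 1` their
majorants are at least `rᴺ / Nᵐ → ∞`. Hence `1 - 1/m ≤ R'_m ≤ 1`.
-/

open Metric Filter

/-- The set of admissible Bohr radii for the pair `(∂^m, id)`: nonnegative `r`
such that for every `f(z) = ∑_{n≥m} aₙ zⁿ` analytic on the unit disk with
`sup_{z∈𝔻} |f^{(m)}(z)| ≤ 1`, the majorant series at every `ρ ∈ [0,r]` converges
and is `≤ 1`. -/
def bohrSetDeriv (m : ℕ) : Set ℝ :=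
  {r | 0 ≤ r ∧ ∀ (f : ℂ → ℂ) (A : ℕ → ℂ),
      (∀ z ∈ Metric.ball (0 : ℂ) 1, HasSum (fun n : ℕ => A n * z ^ n) (f z)) →
      (∀ n, n < m → A n = 0) →
      (∀ z ∈ Metric.ball (0 : ℂ) 1, ‖iteratedDeriv m f z‖ ≤ 1) →
      ∀ ρ : ℝ, 0 ≤ ρ → ρ ≤ r →
        Summable (fun n : ℕ => ‖A n‖ * ρ ^ n) ∧ ∑' n : ℕ, ‖A n‖ * ρ ^ n ≤ 1}

open Nat Topology
open scoped NNReal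

section PowerSeries

variable {𝕜 : Type*} [RCLike 𝕜] {f : 𝕜 → 𝕜} {c : ℕ → 𝕜}

theorem hasFPowerSeriesOnBall_ofScalars_of_hasSum {R : ℝ≥0} (hR : 0 < R)
    (hf : ∀ z ∈ ball (0 : 𝕜) R, HasSum (fun n => c n * z ^ n) (f z)) :
    HasFPowerSeriesOnBall f (FormalMultilinearSeries.ofScalars 𝕜 c) 0 R := by
  refine ⟨ENNReal.le_of_forall_nnreal_lt fun r hr => ?_, by exact_mod_cast hR, fun {y} hy => ?_⟩
  · have hr' : ((r : ℝ) : 𝕜) ∈ ball (0 : 𝕜) R := by simpa using hr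
    refine FormalMultilinearSeries.le_radius_of_tendsto _ (l := 0) ?_
    simpa [FormalMultilinearSeries.ofScalars_norm] using
      (hf _ hr').summable.tendsto_atTop_zero.norm
  · rw [Metric.eball_coe, mem_ball_zero_iff] at hy
    simpa [FormalMultilinearSeries.ofScalars_apply_eq, mul_comm] using
      hf y (mem_ball_zero_iff.2 hy)

theorem HasFPowerSeriesOnBall.iteratedDeriv_zero_ofScalars {r : ENNReal}
    (hf : HasFPowerSeriesOnBall f (FormalMultilinearSeries.ofScalars 𝕜 c) 0 r) (n : ℕ) :
    iteratedDeriv n f 0 = n ! * c n := by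
  simpa [iteratedDeriv_eq_iteratedFDeriv, FormalMultilinearSeries.ofScalars_apply_eq]
    using (hf.factorial_smul 1 n).symm

end PowerSeries

theorem Complex.norm_iteratedDeriv_le_of_forall_mem_ball_norm_le {F : Type*}
    [NormedAddCommGroup F] [NormedSpace ℂ F] [CompleteSpace F] {f : ℂ → F} {c : ℂ} {R C : ℝ}
    (n : ℕ) (hR : 0 < R) (hf : DifferentiableOn ℂ f (ball c R))
    (hC : ∀ z ∈ ball c R, ‖f z‖ ≤ C) :
    ‖iteratedDeriv n f c‖ ≤ n ! * C / R ^ n := by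
  have hlim : Tendsto (fun r : ℝ => n ! * C / r ^ n) (𝓝[<] R) (𝓝 (n ! * C / R ^ n)) :=
    (continuousAt_const.div (continuous_pow n).continuousAt
      (pow_ne_zero n hR.ne')).tendsto.mono_left nhdsWithin_le_nhds
  refine ge_of_tendsto hlim ?_
  filter_upwards [Ioo_mem_nhdsLT hR] with r ⟨hr0, hrR⟩
  refine norm_iteratedDeriv_le_of_forall_mem_sphere_norm_le n hr0 ?_ fun z hz => hC z ?_
  · exact hf.diffContOnCl_ball (closedBall_subset_ball hrR)
  · exact sphere_subset_ball hrR hz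

theorem iteratedDeriv_iteratedDeriv {𝕜 F : Type*} [NontriviallyNormedField 𝕜]
    [NormedAddCommGroup F] [NormedSpace 𝕜 F] (k m : ℕ) (f : 𝕜 → F) :
    iteratedDeriv k (iteratedDeriv m f) = iteratedDeriv (k + m) f := by
  simp only [iteratedDeriv_eq_iterate, Function.iterate_add_apply]

theorem norm_coeff_le_inv_factorial {m : ℕ} {f : ℂ → ℂ} {A : ℕ → ℂ}
    (hf : ∀ z ∈ ball (0 : ℂ) 1, HasSum (fun n => A n * z ^ n) (f z))
    (hA : ∀ n < m, A n = 0) (hbound : ∀ z ∈ ball (0 : ℂ) 1, ‖iteratedDeriv m f z‖ ≤ 1)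
    (n : ℕ) : ‖A n‖ ≤ (m ! : ℝ)⁻¹ := by
  obtain hnm | hmn := lt_or_ge n m
  · simp [hA n hnm]
  obtain ⟨k, rfl⟩ := Nat.exists_eq_add_of_le' hmn
  have hp := hasFPowerSeriesOnBall_ofScalars_of_hasSum (f := f) (c := A) one_pos
    (by simpa using hf)
  have hdiff : DifferentiableOn ℂ (iteratedDeriv m f) (ball 0 1) := by
    have := (hp.analyticOnNhd.iterated_deriv m).differentiableOn
    rwa [Metric.eball_coe, NNReal.coe_one, ← iteratedDeriv_eq_iterate] at this
  have hcauchy : ((k + m)! : ℝ) * ‖A (k + m)‖ ≤ k ! := by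
    have := Complex.norm_iteratedDeriv_le_of_forall_mem_ball_norm_le k one_pos hdiff hbound
    rwa [iteratedDeriv_iteratedDeriv, hp.iteratedDeriv_zero_ofScalars, norm_mul,
      Complex.norm_natCast, mul_one, one_pow, div_one] at this
  have hfac : (k ! * m ! : ℝ) ≤ (k + m)! := by
    exact_mod_cast Nat.le_of_dvd (factorial_pos _) (factorial_mul_factorial_dvd_factorial_add k m)
  rw [← one_div, le_div_iff₀ (by positivity)]
  nlinarith [norm_nonneg (A (k + m)), (cast_pos.2 (factorial_pos k) : 0 < (k ! : ℝ))]

theorem summable_and_tsum_le_of_norm_le {E : Type*} [SeminormedAddCommGroup E] {A : ℕ → E}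
    {C ρ : ℝ} (hA : ∀ n, ‖A n‖ ≤ C) (hρ0 : 0 ≤ ρ) (hρ1 : ρ < 1) :
    Summable (fun n => ‖A n‖ * ρ ^ n) ∧ ∑' n, ‖A n‖ * ρ ^ n ≤ C * (1 - ρ)⁻¹ := by
  have hgeom : HasSum (fun n => C * ρ ^ n) (C * (1 - ρ)⁻¹) :=
    (hasSum_geometric_of_lt_one hρ0 hρ1).mul_left C
  have hle (n : ℕ) : ‖A n‖ * ρ ^ n ≤ C * ρ ^ n := by gcongr; exact hA n
  have hsum : Summable (fun n => ‖A n‖ * ρ ^ n) :=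
    hgeom.summable.of_nonneg_of_le (fun n => by positivity) hle
  exact ⟨hsum, hgeom.tsum_eq ▸ hsum.tsum_le_tsum hle hgeom.summable⟩

theorem one_sub_inv_mem_bohrSetDeriv {m : ℕ} (hm : 1 ≤ m) : 1 - (m : ℝ)⁻¹ ∈ bohrSetDeriv m := by
  have hm' : (1 : ℝ) ≤ m := by exact_mod_cast hm
  refine ⟨sub_nonneg.2 (inv_le_one_of_one_le₀ hm'), fun f A hf hA hbound ρ hρ0 hρr => ?_⟩
  have hρ1 : (m : ℝ)⁻¹ ≤ 1 - ρ := by linarith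
  obtain ⟨hsum, htsum⟩ :=
    summable_and_tsum_le_of_norm_le (norm_coeff_le_inv_factorial hf hA hbound) hρ0
      (by linarith [inv_pos.2 (zero_lt_one.trans_le hm')])
  refine ⟨hsum, htsum.trans ?_⟩
  calc (m ! : ℝ)⁻¹ * (1 - ρ)⁻¹ ≤ (m ! : ℝ)⁻¹ * m := by
        gcongr
        exact inv_le_of_inv_le₀ (by positivity) hρ1
    _ ≤ 1 := by
        rw [inv_mul_le_one₀ (by positivity)]
        exact_mod_cast self_le_factorial m

theorem pow_le_descFactorial_of_mem_bohrSetDeriv {m N : ℕ} {r : ℝ} (hr : r ∈ bohrSetDeriv m)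
    (hN : m ≤ N) : r ^ N ≤ N.descFactorial m := by
  set d : ℂ := (N.descFactorial m : ℂ)
  have hd : d ≠ 0 := by
    simpa [d, Nat.descFactorial_eq_zero_iff_lt] using hN
  set A : ℕ → ℂ := fun n => if n = N then d⁻¹ else 0
  have hA (n : ℕ) (hn : n ≠ N) : A n = 0 := if_neg hn
  have hAN : A N = d⁻¹ := if_pos rfl
  have hf (z : ℂ) : HasSum (fun n => A n * z ^ n) (d⁻¹ * z ^ N) := by
    simpa [A] using hasSum_single (f := fun n => A n * z ^ n) N fun n hn => by simp [hA n hn]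
  have hderiv (z : ℂ) (hz : z ∈ ball (0 : ℂ) 1) :
      ‖iteratedDeriv m (fun z => d⁻¹ * z ^ N) z‖ ≤ 1 := by
    rw [iteratedDeriv_const_mul_field, iteratedDeriv_pow, ← mul_assoc, inv_mul_cancel₀ hd,
      one_mul, norm_pow]
    exact pow_le_one₀ (norm_nonneg z) (mem_ball_zero_iff.1 hz).le
  have := (hr.2 _ A (fun z _ => hf z) (fun n hn => hA n (by omega)) hderiv r hr.1 le_rfl).2
  rwa [tsum_eq_single N fun n hn => by simp [hA n hn], hAN, norm_inv,
    inv_mul_le_iff₀ (norm_pos_iff.2 hd), mul_one, Complex.norm_natCast] at this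

theorem le_one_of_mem_bohrSetDeriv {m : ℕ} {r : ℝ} (hr : r ∈ bohrSetDeriv m) : r ≤ 1 := by
  by_contra! h
  obtain ⟨N, hN, hlt⟩ := ((eventually_ge_atTop m).and
    ((tendsto_pow_const_div_const_pow_of_one_lt m h).eventually_lt_const one_pos)).exists
  have hpow : r ^ N ≤ (N : ℝ) ^ m :=
    (pow_le_descFactorial_of_mem_bohrSetDeriv hr hN).trans (mod_cast N.descFactorial_le_pow m)
  rw [div_lt_one (by positivity)] at hlt
  linarith

theorem bohr_radius_mth_derivative_tendsto_one :
    Filter.Tendsto (fun m : ℕ => sSup (bohrSetDeriv m)) Filter.atTop (nhds 1) := by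
  have hlower : Tendsto (fun m : ℕ => 1 - (m : ℝ)⁻¹) atTop (𝓝 1) := by
    simpa using (tendsto_inv_atTop_nhds_zero_nat (𝕜 := ℝ)).const_sub 1
  have hbdd (m : ℕ) : BddAbove (bohrSetDeriv m) := ⟨1, fun _ => le_one_of_mem_bohrSetDeriv⟩
  refine tendsto_of_tendsto_of_tendsto_of_le_of_le' hlower tendsto_const_nhds ?_ ?_
  · filter_upwards [eventually_ge_atTop 1] with m hm
    exact le_csSup (hbdd m) (one_sub_inv_mem_bohrSetDeriv hm)
  · filter_upwards [eventually_ge_atTop 1] with m hm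
    exact csSup_le ⟨_, one_sub_inv_mem_bohrSetDeriv hm⟩ fun _ => le_one_of_mem_bohrSetDeriv
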